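/- arXiv:2211.03220 — 2 statements merged into one kernel-verified Lean document; each statement's English description precedes it below -/
import Mathlib

section
/- For any nonnegative integers s, t, u, n, r satisfying s·2^t ≤ n < (s+1)·2^t − 1 and n + 1 − (s−u)·2^t ≤ r < (u+1)·2^t, the binomial coefficient C(n, r) is even. -/
/-! By Kummer's theorem, `p ∣ C(n, k)` as soon as the base-`p` addition of `k` and `n - k` carries
out of the lowest `t` digits, i.e. `p ^ t ≤ k % p ^ t + (n - k) % p ^ t`; this is forced when
`n % p ^ t < k % p ^ t`, since the two residues add up to `n` modulo `p ^ t`. The hypotheses of the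
theorem say that `n` and `r` have quotients `s` and `u` by `2 ^ t`, and then that
`n % 2 ^ t < r % 2 ^ t`. -/

open Nat Finset

theorem Nat.Prime.dvd_choose_of_mod_lt {p n k t : ℕ} (hp : p.Prime) (h : n % p ^ t < k % p ^ t) :
    p ∣ n.choose k := by
  rcases lt_or_ge n k with hnk | hkn
  · simp [choose_eq_zero_of_lt hnk]
  have : Fact p.Prime := ⟨hp⟩
  have ht : t ≠ 0 := by rintro rfl; simp [Nat.mod_one] at h
  have hcarry : p ^ t ≤ k % p ^ t + (n - k) % p ^ t := by
    by_contra! hlt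
    have hsum : (k % p ^ t + (n - k) % p ^ t) % p ^ t = n % p ^ t := by
      rw [← Nat.add_mod, Nat.add_sub_cancel' hkn]
    rw [Nat.mod_eq_of_lt hlt] at hsum
    exact h.not_ge (hsum ▸ Nat.le_add_right _ _)
  apply dvd_of_one_le_padicValNat
  rw [padicValNat_choose (b := max (log p n) t + 1) hkn (by omega)]
  exact Finset.card_pos.mpr ⟨t, mem_filter.mpr ⟨mem_Ico.mpr ⟨by omega, by omega⟩, hcarry⟩⟩

/-- For nonnegative integers s, t, u, n, r with s·2^t ≤ n < (s+1)·2^t − 1 and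
n + 1 − (s−u)·2^t ≤ r < (u+1)·2^t, the binomial coefficient C(n, r) is even. -/
theorem choose_even_of_triangle (s t u n r : ℕ)
    (h1 : (s : ℤ) * 2 ^ t ≤ n)
    (h2 : (n : ℤ) < (s + 1) * 2 ^ t - 1)
    (h3 : (n : ℤ) + 1 - ((s : ℤ) - u) * 2 ^ t ≤ r)
    (h4 : (r : ℤ) < ((u : ℤ) + 1) * 2 ^ t) :
    Even (n.choose r) := by
  have hP : (0 : ℤ) < 2 ^ t := by positivity
  have hn : (n : ℤ) / 2 ^ t = s := (Int.ediv_eq_iff_of_pos hP).mpr ⟨h1, by linarith⟩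
  have hr : (r : ℤ) / 2 ^ t = u := (Int.ediv_eq_iff_of_pos hP).mpr ⟨by linarith, by linarith⟩
  have hlt : n % 2 ^ t < r % 2 ^ t := by
    zify
    rw [Int.emod_def, Int.emod_def, hn, hr]
    linarith
  exact even_iff_two_dvd.mpr (prime_two.dvd_choose_of_mod_lt hlt)
end

section
/- Let Q = 2^(2ℓ−1) for ℓ ≥ 1, and let i satisfy i ≡ 1 (mod 6), 1 < i < Q. Set b = (Q + i − 3)/3 (an integer). Then the binomial coefficient C(Q − i − 1, b) is even. -/
/-!
Write `Q = 2 ^ (2L + 1)` and `b = (Q + i - 3) / 3`. Since `Q - i - 1 = (Q - 1) - i` is the binary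
complement of `i` below `Q`, Lucas' theorem makes `C(Q - i - 1, b)` even as soon as `b` and `i`
have a binary digit in common. That they do is proved by descending on `L`, together with the
companion family `3 c = Q + j`, `j ≡ 4 (mod 6)`; both families are encoded at once as
`3 c + 3 (j % 2) = Q + j`, `j ≡ 1 (mod 3)`. Reading `j` mod 24 either exhibits a common bit among
the three lowest ones, or strips the two lowest bits of `c` and `j`, which turns `Q` into `Q / 4`
and lands again in one of the two families.
-/

namespace Nat

theorem even_choose_of_testBit {n k p : ℕ} (hk : k.testBit p) (hn : n.testBit p = false) :
    Even (n.choose k) := by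
  induction p generalizing n k with
  | zero =>
    have lucas := Choose.choose_modEq_choose_mod_mul_choose_div_nat (p := 2) (n := n) (k := k)
    simp only [testBit_zero, decide_eq_true_eq, decide_eq_false_iff_not] at hk hn
    rw [hk, show n % 2 = 0 by omega, choose_zero_succ, zero_mul] at lucas
    exact even_iff.2 lucas
  | succ p ih =>
    rw [testBit_succ] at hk hn
    have lucas := Choose.choose_modEq_choose_mod_mul_choose_div_nat (p := 2) (n := n) (k := k)
    exact even_iff.2 (Eq.trans lucas (even_iff.1 ((ih hk hn).mul_left _)))

theorem land_ne_zero_of_div_two_pow {a b : ℕ} (n : ℕ) (h : a / 2 ^ n &&& b / 2 ^ n ≠ 0) :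
    a &&& b ≠ 0 := by
  rw [← and_div_two_pow] at h
  rintro hab
  simp [hab] at h

theorem land_ne_zero_of_mod_two_pow {a b x y n : ℕ} (ha : a % 2 ^ n = x) (hb : b % 2 ^ n = y)
    (hxy : x &&& y ≠ 0) : a &&& b ≠ 0 := by
  rw [← ha, ← hb, ← and_mod_two_pow] at hxy
  rintro hab
  simp [hab] at hxy

theorem land_add_one_of_even {a b : ℕ} (ha : Even a) (hb : Even b) : a &&& (b + 1) = a &&& b := by
  rw [even_iff] at ha hb
  apply eq_of_testBit_eq
  intro i
  cases i with
  | zero => simp [ha]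
  | succ i => rw [testBit_land, testBit_land, testBit_succ, testBit_succ (b + 1),
      show (b + 1) / 2 = b / 2 by omega, ← testBit_succ, ← testBit_succ]

end Nat

theorem two_pow_two_mul_add_one_mod_six (L : ℕ) : 2 ^ (2 * L + 1) % 6 = 2 := by
  have h : 4 ^ L % 3 = 1 := by rw [Nat.pow_mod]; simp
  rw [pow_succ, pow_mul, show 2 ^ 2 = 4 by rfl]
  omega

theorem land_ne_zero_of_three_mul_add_eq (L : ℕ) {c j : ℕ}
    (h : 3 * c + 3 * (j % 2) = 2 ^ (2 * L + 1) + j) (hj3 : j % 3 = 1) (hj1 : 1 < j)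
    (hjQ : j < 2 ^ (2 * L + 1)) : c &&& j ≠ 0 := by
  induction L generalizing c j with
  | zero => omega
  | succ L ih =>
    have hQ : 2 ^ (2 * (L + 1) + 1) = 4 * 2 ^ (2 * L + 1) := by ring
    have hQ6 := two_pow_two_mul_add_one_mod_six L
    rw [hQ] at h hjQ
    rcases (by omega : j % 24 = 1 ∨ j % 24 = 16 ∨ j % 24 = 19 ∨ j % 24 = 4 ∨ j % 24 = 7 ∨
      j % 24 = 10 ∨ j % 24 = 13 ∨ j % 24 = 22) with hj | hj | hj | hj | hj | hj | hj | hj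
    · -- `c / 4` and `j / 4` are even, so appending the bit `1` to `j / 4` changes no common bit.
      have := ih (c := c / 4) (j := j / 4 + 1) (by omega) (by omega) (by omega) (by omega)
      rw [Nat.land_add_one_of_even (Nat.even_iff.2 (by omega)) (Nat.even_iff.2 (by omega))] at this
      exact Nat.land_ne_zero_of_div_two_pow 2 this
    · exact Nat.land_ne_zero_of_div_two_pow 2 (ih (by omega) (by omega) (by omega) (by omega))
    · exact Nat.land_ne_zero_of_div_two_pow 2 (ih (by omega) (by omega) (by omega) (by omega))
    · exact Nat.land_ne_zero_of_mod_two_pow (n := 3)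
        (by omega : c % 8 = 4) (by omega : j % 8 = 4) (by decide)
    · exact Nat.land_ne_zero_of_mod_two_pow (n := 3)
        (by omega : c % 8 = 4) (by omega : j % 8 = 7) (by decide)
    · exact Nat.land_ne_zero_of_mod_two_pow (n := 3)
        (by omega : c % 8 = 6) (by omega : j % 8 = 2) (by decide)
    · exact Nat.land_ne_zero_of_mod_two_pow (n := 3)
        (by omega : c % 8 = 6) (by omega : j % 8 = 5) (by decide)
    · exact Nat.land_ne_zero_of_mod_two_pow (n := 3)
        (by omega : c % 8 = 2) (by omega : j % 8 = 6) (by decide)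

/-- Let Q = 2^(2ℓ−1) with ℓ ≥ 1, and let i ≡ 1 (mod 6) with 1 < i < Q.
Setting b = (Q + i − 3)/3, the binomial coefficient C(Q − i − 1, b) is even. -/
theorem choose_even_finite_escape (ℓ i : ℕ) (hℓ : 1 ≤ ℓ)
    (hi6 : i % 6 = 1) (hi1 : 1 < i) (hiQ : i < 2 ^ (2 * ℓ - 1)) :
    Even ((2 ^ (2 * ℓ - 1) - i - 1).choose ((2 ^ (2 * ℓ - 1) + i - 3) / 3)) := by
  obtain ⟨L, hL⟩ : ∃ L, 2 * ℓ - 1 = 2 * L + 1 := ⟨ℓ - 1, by omega⟩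
  rw [hL] at hiQ ⊢
  have hQ6 := two_pow_two_mul_add_one_mod_six L
  set b := (2 ^ (2 * L + 1) + i - 3) / 3
  have hb : 3 * b + 3 * (i % 2) = 2 ^ (2 * L + 1) + i := by omega
  obtain ⟨p, hp⟩ :=
    Nat.exists_testBit_of_ne_zero (land_ne_zero_of_three_mul_add_eq L hb (by omega) hi1 hiQ)
  rw [Nat.testBit_land, Bool.and_eq_true] at hp
  refine Nat.even_choose_of_testBit hp.1 ?_
  rw [Nat.sub_sub, Nat.testBit_two_pow_sub_succ hiQ, hp.2]
  simp
end
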